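/- Let h: ℕ→ℕ be a strictly increasing function, β < ε₀ an ordinal, and x₀ ∈ ℕ such that h(x) ≤ F_β(x) for all x ≥ x₀. Then for every ordinal α < ε₀ and every x ≥ x₀, F_{h,α}(x) ≤ F_{F_β,α}(x), where F_{F_β,α} is the relativized fast-growing hierarchy with base function F_β. -/

import Mathlib

open ONote Ordinal

/-- The relativized fast-growing hierarchy `F_{h,α}`, indexed by ordinal notations `< ε₀`:
`F_{h,0} = h`, `F_{h,α+1}(x) = F_{h,α}^[x+1](x)`, and `F_{h,λ}(x) = F_{h,λ(x)}(x)` for `λ` a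
limit, using the standard assignment of fundamental sequences.  The (standard) fast-growing
hierarchy `F_α` of the paper is recovered as `FGH Nat.succ`. -/
def FGH (h : ℕ → ℕ) : ONote → ℕ → ℕ
  | o =>
    match fundamentalSequence o, fundamentalSequence_has_prop o with
    | Sum.inl none, _ => h
    | Sum.inl (some a), hp =>
      have : a < o := by rw [lt_def, hp.1]; exact Order.lt_succ _
      fun i => (FGH h a)^[i + 1] i
    | Sum.inr f, hp => fun i =>
      have : f i < o := (hp.2.1 i).2.1
      FGH h (f i) i
  termination_by o => o

/-! The comparison `F_{h,α}(x) ≤ F_{g,α}(x)` for `x ≥ x₀` is proved by induction on `α`; at a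
successor stage it only needs `F_{h,α'}` to be inflationary (so the iterates stay above `x₀`) and
`F_{g,α'}` to be monotone. Monotonicity of `F_{g,α}` is the substantial part: at a limit `λ` it
amounts to `F_{g,λ(x)}(y) ≤ F_{g,λ(y)}(y)` for `x ≤ y`. This is the Bachmann property of the
standard fundamental sequences: `λ(x)` is reached from `λ(y)` by finitely many steps, each to a
predecessor or to a fundamental-sequence term of index `≤ y`, and no such step increases
`F_{g,·}(y)`. -/

namespace ONote

theorem eq_zero_of_fundamentalSequence_eq_inl_none {o : ONote}
    (e : fundamentalSequence o = Sum.inl none) : o = 0 := by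
  simpa [e, fundamentalSequenceProp_inl_none] using fundamentalSequence_has_prop o

theorem lt_of_fundamentalSequence_eq_inl_some {o a : ONote}
    (e : fundamentalSequence o = Sum.inl (some a)) : a < o := by
  have hp := fundamentalSequence_has_prop o
  rw [e] at hp
  rw [lt_def, hp.1]
  exact Order.lt_succ _

theorem lt_of_fundamentalSequence_eq_inr {o : ONote} {f : ℕ → ONote}
    (e : fundamentalSequence o = Sum.inr f) (i : ℕ) : f i < o := by
  have hp := fundamentalSequence_has_prop o
  rw [e] at hp
  exact (hp.2.1 i).2.1

theorem fundamentalSequence_oadd_of_inr (a : ONote) (n : ℕ+) {b : ONote} {f : ℕ → ONote}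
    (e : fundamentalSequence b = Sum.inr f) :
    fundamentalSequence (oadd a n b) = Sum.inr fun i => oadd a n (f i) := by
  rw [fundamentalSequence, e]

theorem fundamentalSequence_oadd_of_inl_some (a : ONote) (n : ℕ+) {b b' : ONote}
    (e : fundamentalSequence b = Sum.inl (some b')) :
    fundamentalSequence (oadd a n b) = Sum.inl (some (oadd a n b')) := by
  rw [fundamentalSequence, e]

theorem fundamentalSequence_oadd_one_zero_of_inl_some {a a' : ONote}
    (e : fundamentalSequence a = Sum.inl (some a')) :
    fundamentalSequence (oadd a 1 0) = Sum.inr fun i => oadd a' i.succPNat 0 := by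
  rw [fundamentalSequence, e]
  rfl

theorem fundamentalSequence_oadd_one_zero_of_inr {a : ONote} {f : ℕ → ONote}
    (e : fundamentalSequence a = Sum.inr f) :
    fundamentalSequence (oadd a 1 0) = Sum.inr fun i => oadd (f i) 1 0 := by
  rw [fundamentalSequence, e]
  rfl

/-- `FundamentalStep n a b`: `b` is the successor of `a`, or `a` is one of the first `n + 1`
terms of the fundamental sequence of `b`. -/
def FundamentalStep (n : ℕ) (a b : ONote) : Prop :=
  fundamentalSequence b = Sum.inl (some a) ∨
    ∃ f j, fundamentalSequence b = Sum.inr f ∧ j ≤ n ∧ a = f j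

abbrev FundamentalDescent (n : ℕ) : ONote → ONote → Prop :=
  Relation.ReflTransGen (FundamentalStep n)

variable {n : ℕ} {a b : ONote}

theorem FundamentalStep.mono {k : ℕ} (hnk : n ≤ k) (h : FundamentalStep n a b) :
    FundamentalStep k a b := by
  rcases h with h | ⟨f, j, hf, hj, rfl⟩
  · exact .inl h
  · exact .inr ⟨f, j, hf, hj.trans hnk, rfl⟩

theorem FundamentalDescent.mono {k : ℕ} (hnk : n ≤ k) (h : FundamentalDescent n a b) :
    FundamentalDescent k a b :=
  Relation.ReflTransGen.mono (fun _ _ => FundamentalStep.mono hnk) _ _ h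

theorem FundamentalStep.oadd_tail (e : ONote) (m : ℕ+) (h : FundamentalStep n a b) :
    FundamentalStep n (oadd e m a) (oadd e m b) := by
  rcases h with h | ⟨f, j, hf, hj, rfl⟩
  · exact .inl (fundamentalSequence_oadd_of_inl_some e m h)
  · exact .inr ⟨_, j, fundamentalSequence_oadd_of_inr e m hf, hj, rfl⟩

theorem FundamentalStep.oadd_exp (h : FundamentalStep n a b) :
    FundamentalStep n (oadd a 1 0) (oadd b 1 0) := by
  rcases h with h | ⟨f, j, hf, hj, rfl⟩
  · exact .inr ⟨_, 0, fundamentalSequence_oadd_one_zero_of_inl_some h, n.zero_le, rfl⟩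
  · exact .inr ⟨_, j, fundamentalSequence_oadd_one_zero_of_inr hf, hj, rfl⟩

theorem FundamentalDescent.oadd_tail (e : ONote) (m : ℕ+) (h : FundamentalDescent n a b) :
    FundamentalDescent n (oadd e m a) (oadd e m b) :=
  Relation.ReflTransGen.lift (oadd e m) (fun _ _ => FundamentalStep.oadd_tail e m) _ _ h

theorem FundamentalDescent.oadd_exp (h : FundamentalDescent n a b) :
    FundamentalDescent n (oadd a 1 0) (oadd b 1 0) :=
  Relation.ReflTransGen.lift (fun c => oadd c 1 0) (fun _ _ => FundamentalStep.oadd_exp) _ _ h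

theorem fundamentalDescent_zero_left (o : ONote) : FundamentalDescent 0 0 o := by
  rcases e : fundamentalSequence o with (_ | o') | f
  · rw [eq_zero_of_fundamentalSequence_eq_inl_none e]
  · have : o' < o := lt_of_fundamentalSequence_eq_inl_some e
    exact (fundamentalDescent_zero_left o').tail (.inl e)
  · have : f 0 < o := lt_of_fundamentalSequence_eq_inr e 0
    exact (fundamentalDescent_zero_left (f 0)).tail (.inr ⟨f, 0, e, le_rfl, rfl⟩)
termination_by o

theorem fundamentalDescent_oadd_succPNat_zero (e : ONote) (k : ℕ) :
    FundamentalDescent 0 (oadd e k.succPNat 0) (oadd e (k + 1).succPNat 0) := by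
  -- unless `e = 0`, the first step goes to `ω^e·(k+1) + t` for some `t`, and `t` descends to `0`
  have tail (t : ONote) : FundamentalDescent 0 (oadd e k.succPNat 0) (oadd e k.succPNat t) :=
    (fundamentalDescent_zero_left t).oadd_tail e k.succPNat
  rcases he : fundamentalSequence e with (_ | e') | g
  · obtain rfl := eq_zero_of_fundamentalSequence_eq_inl_none he
    exact .single (.inl (by rw [fundamentalSequence]; rfl))
  · refine (tail _).tail
      (.inr ⟨fun i => oadd e k.succPNat (oadd e' i.succPNat 0), 0, ?_, le_rfl, rfl⟩)
    rw [fundamentalSequence, he]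
    rfl
  · refine (tail _).tail (.inr ⟨fun i => oadd e k.succPNat (oadd (g i) 1 0), 0, ?_, le_rfl, rfl⟩)
    rw [fundamentalSequence, he]
    rfl

theorem fundamentalDescent_fundamentalSequence_succ :
    ∀ {o : ONote} {f : ℕ → ONote}, fundamentalSequence o = Sum.inr f →
      ∀ m, FundamentalDescent m (f m) (f (m + 1))
  | zero, _, e, _ => by cases e
  | oadd a n b, f, e, m => by
    rw [fundamentalSequence] at e
    rcases eb : fundamentalSequence b with (_ | _) | fb <;> simp only [eb] at e
    · rcases ea : fundamentalSequence a with (_ | a') | g <;> rcases hn : n.natPred with _ | k <;>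
        simp only [ea, hn] at e <;> cases e
      · exact (fundamentalDescent_oadd_succPNat_zero a' m).mono m.zero_le
      · exact ((fundamentalDescent_oadd_succPNat_zero a' m).mono m.zero_le).oadd_tail a
          k.succPNat
      · exact (fundamentalDescent_fundamentalSequence_succ ea m).oadd_exp
      · exact (fundamentalDescent_fundamentalSequence_succ ea m).oadd_exp.oadd_tail a
          k.succPNat
    · cases e
    · cases e
      exact (fundamentalDescent_fundamentalSequence_succ eb m).oadd_tail a n

theorem fundamentalDescent_fundamentalSequence_of_le {o : ONote} {f : ℕ → ONote}
    (e : fundamentalSequence o = Sum.inr f) {j x : ℕ} (hjx : j ≤ x) :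
    FundamentalDescent x (f j) (f x) := by
  induction x, hjx using Nat.le_induction with
  | base => exact .refl
  | succ x _ ih =>
    exact .mono x.le_succ (ih.trans (fundamentalDescent_fundamentalSequence_succ e x))

end ONote

theorem Monotone.iterate_le_of_le_on_Ici {α : Type*} [Preorder α] {F G : α → α} {x₀ : α}
    (hG : Monotone G) (hF : id ≤ F) (hle : ∀ z, x₀ ≤ z → F z ≤ G z) (k : ℕ) {x : α}
    (hx : x₀ ≤ x) : F^[k] x ≤ G^[k] x := by
  induction k generalizing x with
  | zero => exact le_rfl
  | succ k ih =>
    calc F^[k + 1] x = F^[k] (F x) := Function.iterate_succ_apply F k x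
      _ ≤ G^[k] (F x) := ih (hx.trans (hF x))
      _ ≤ G^[k] (G x) := hG.iterate k (hle x hx)
      _ = G^[k + 1] x := (Function.iterate_succ_apply G k x).symm

variable {g h : ℕ → ℕ} {o : ONote}

theorem FGH_zero (e : fundamentalSequence o = Sum.inl none) : FGH h o = h := by
  rw [FGH]; split <;> simp_all

theorem FGH_succ {a : ONote} (e : fundamentalSequence o = Sum.inl (some a)) :
    FGH h o = fun x => (FGH h a)^[x + 1] x := by
  rw [FGH]; split <;> simp_all

theorem FGH_limit {f : ℕ → ONote} (e : fundamentalSequence o = Sum.inr f) :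
    FGH h o = fun x => FGH h (f x) x := by
  rw [FGH]; split <;> simp_all

theorem id_le_FGH (hh : id ≤ h) (o : ONote) : id ≤ FGH h o := by
  intro x
  rcases e : fundamentalSequence o with (_ | a) | f
  · rw [FGH_zero e]
    exact hh x
  · have : a < o := lt_of_fundamentalSequence_eq_inl_some e
    rw [FGH_succ e]
    exact Function.id_le_iterate_of_id_le (id_le_FGH hh a) (x + 1) x
  · have : f x < o := lt_of_fundamentalSequence_eq_inr e x
    rw [FGH_limit e]
    exact id_le_FGH hh (f x) x
termination_by o

theorem FGH_le_of_fundamentalDescent (hh : id ≤ h) {n x : ℕ} (hnx : n ≤ x) {a b : ONote}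
    (hab : FundamentalDescent n a b) : FGH h a x ≤ FGH h b x := by
  rcases hab.cases_tail with rfl | ⟨c, hac, hcb⟩
  · exact le_rfl
  rcases hcb with hcb | ⟨f, j, hf, hj, rfl⟩
  · have : c < b := lt_of_fundamentalSequence_eq_inl_some hcb
    calc FGH h a x ≤ FGH h c x := FGH_le_of_fundamentalDescent hh hnx hac
      _ = (FGH h c)^[1] x := rfl
      _ ≤ (FGH h c)^[x + 1] x :=
        Function.monotone_iterate_of_id_le (id_le_FGH hh c) (by omega : 1 ≤ x + 1) x
      _ = FGH h b x := by rw [FGH_succ hcb]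
  · have : f x < b := lt_of_fundamentalSequence_eq_inr hf x
    rw [FGH_limit hf]
    exact FGH_le_of_fundamentalDescent hh le_rfl <| (FundamentalDescent.mono hnx hac).trans
      (fundamentalDescent_fundamentalSequence_of_le hf (hj.trans hnx))
termination_by b

theorem monotone_FGH (hh : id ≤ h) (hm : Monotone h) (o : ONote) : Monotone (FGH h o) := by
  intro x y hxy
  rcases e : fundamentalSequence o with (_ | a) | f
  · rw [FGH_zero e]
    exact hm hxy
  · have : a < o := lt_of_fundamentalSequence_eq_inl_some e
    rw [FGH_succ e]
    calc (FGH h a)^[x + 1] x ≤ (FGH h a)^[x + 1] y := (monotone_FGH hh hm a).iterate _ hxy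
      _ ≤ (FGH h a)^[y + 1] y :=
        Function.monotone_iterate_of_id_le (id_le_FGH hh a) (by omega : x + 1 ≤ y + 1) y
  · have : f x < o := lt_of_fundamentalSequence_eq_inr e x
    rw [FGH_limit e]
    calc FGH h (f x) x ≤ FGH h (f x) y := monotone_FGH hh hm (f x) hxy
      _ ≤ FGH h (f y) y := FGH_le_of_fundamentalDescent hh le_rfl
        (fundamentalDescent_fundamentalSequence_of_le e hxy)
termination_by o

theorem FGH_le_FGH_of_le (hh : id ≤ h) (hg : id ≤ g) (hgm : Monotone g) {x₀ : ℕ}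
    (hle : ∀ x, x₀ ≤ x → h x ≤ g x) (o : ONote) {x : ℕ} (hx : x₀ ≤ x) :
    FGH h o x ≤ FGH g o x := by
  rcases e : fundamentalSequence o with (_ | a) | f
  · rw [FGH_zero e, FGH_zero e]
    exact hle x hx
  · have : a < o := lt_of_fundamentalSequence_eq_inl_some e
    rw [FGH_succ e, FGH_succ e]
    exact (monotone_FGH hg hgm a).iterate_le_of_le_on_Ici (id_le_FGH hh a)
      (fun z hz => FGH_le_FGH_of_le hh hg hgm hle a hz) (x + 1) hx
  · have : f x < o := lt_of_fundamentalSequence_eq_inr e x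
    rw [FGH_limit e, FGH_limit e]
    exact FGH_le_FGH_of_le hh hg hgm hle (f x) hx
termination_by o

theorem relativized_fastGrowing_le_of_base_le_general (h : ℕ → ℕ) (hh : StrictMono h) (β : ONote)
    (x₀ : ℕ) (hle : ∀ x, x₀ ≤ x → h x ≤ FGH Nat.succ β x)
    (α : ONote) (x : ℕ) (hx : x₀ ≤ x) :
    FGH h α x ≤ FGH (FGH Nat.succ β) α x :=
  have hsucc : id ≤ Nat.succ := Nat.le_succ
  have hβ : Monotone (FGH Nat.succ β) := monotone_FGH hsucc (fun _ _ => Nat.succ_le_succ) β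
  FGH_le_FGH_of_le hh.id_le (id_le_FGH hsucc β) hβ hle α hx

/-- Let `h : ℕ → ℕ` be strictly increasing, `β < ε₀` and `x₀ ∈ ℕ` be such that
`h(x) ≤ F_β(x)` for all `x ≥ x₀`.  Then for every `α < ε₀` and every `x ≥ x₀`,
`F_{h,α}(x) ≤ F_{F_β,α}(x)`. -/
theorem relativized_fastGrowing_le_of_base_le (h : ℕ → ℕ) (hh : StrictMono h) (β : ONote)
    (hNFβ : β.NF) (x₀ : ℕ) (hle : ∀ x, x₀ ≤ x → h x ≤ FGH Nat.succ β x)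
    (α : ONote) (hNFα : α.NF) (x : ℕ) (hx : x₀ ≤ x) :
    FGH h α x ≤ FGH (FGH Nat.succ β) α x :=
  relativized_fastGrowing_le_of_base_le_general h hh β x₀ hle α x hx
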